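/- Let a > 0 and U := (0, a) ⊂ ℝ. Then for every smooth compactly supported function f with support in (0, a), ∫₀^a a² |f(x)|² / (x² (a − x)²) dx ≤ 4 ∫₀^a |f′(x)|² dx. -/

import Mathlib

open MeasureTheory Set

/-- **Hardy's inequality on a bounded interval.** For `U = (0, a)` with `a > 0`, every
`f ∈ C_c^∞(0, a)` satisfies `∫₀^a a² |f(x)|² / (x² (a-x)²) dx ≤ 4 ∫₀^a |f'(x)|² dx`. -/
theorem hardy_interval (a : ℝ) (ha : 0 < a)
    (f : ℝ → ℝ) (hf : ContDiff ℝ (⊤ : ℕ∞) f)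
    (hsupp : HasCompactSupport f) (hsuppU : tsupport f ⊆ Set.Ioo 0 a) :
    ∫ x in Set.Ioo 0 a, a ^ 2 * f x ^ 2 / (x ^ 2 * (a - x) ^ 2) ≤
      4 * ∫ x in Set.Ioo 0 a, deriv f x ^ 2 := by
  have hfd : Differentiable ℝ f := hf.differentiable (by simp)
  have hfc : Continuous f := hf.continuous
  have hf'c : Continuous (deriv f) := hf.continuous_deriv (by simp)
  -- auxiliary functions
  set h : ℝ → ℝ := fun x => 1 / (2 * x) - 1 / (2 * (a - x)) with hh_def
  set F : ℝ → ℝ := fun x => h x * f x ^ 2 with hF_def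
  set G : ℝ → ℝ := fun x => (2 * (deriv f x - h x * f x)) ^ 2 with hG_def
  set W : ℝ → ℝ := fun x => a ^ 2 * f x ^ 2 / (x ^ 2 * (a - x) ^ 2) with hW_def
  -- facts off the support
  have hopen : IsOpen (tsupport f)ᶜ := (isClosed_tsupport f).isOpen_compl
  have hfe0 : ∀ x ∉ tsupport f, f =ᶠ[nhds x] 0 := fun x hx =>
    Filter.eventually_of_mem (hopen.mem_nhds hx)
      (fun y hy => image_eq_zero_of_notMem_tsupport hy)
  have hf'0 : ∀ x ∉ tsupport f, deriv f x = 0 := by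
    intro x hx
    rw [(hfe0 x hx).deriv_eq]
    exact deriv_const x 0
  have hFe0 : ∀ x ∉ tsupport f, F =ᶠ[nhds x] 0 := by
    intro x hx
    filter_upwards [hfe0 x hx] with y hy
    simp [hF_def, hy]
  have hF'0 : ∀ x ∉ tsupport f, deriv F x = 0 := by
    intro x hx
    rw [(hFe0 x hx).deriv_eq]
    exact deriv_const x 0
  have hGe0 : ∀ x ∉ tsupport f, G =ᶠ[nhds x] 0 := by
    intro x hx
    have : ∀ᶠ y in nhds x, y ∉ tsupport f :=
      Filter.eventually_of_mem (hopen.mem_nhds hx) (fun y hy => hy)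
    filter_upwards [hfe0 x hx, this] with y hy hy'
    simp [hG_def, hy, hf'0 y hy']
  have hWe0 : ∀ x ∉ tsupport f, W =ᶠ[nhds x] 0 := by
    intro x hx
    filter_upwards [hfe0 x hx] with y hy
    simp [hW_def, hy]
  -- derivative of h and F on Ioo 0 a
  have hhd : ∀ x ∈ Ioo 0 a, HasDerivAt h (-(1 / (2 * x ^ 2)) - 1 / (2 * (a - x) ^ 2)) x := by
    intro x hx
    have hx0 : x ≠ 0 := ne_of_gt hx.1
    have hxa : a - x ≠ 0 := ne_of_gt (sub_pos.2 hx.2)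
    have h1 : HasDerivAt (fun x : ℝ => 2 * x) 2 x := by
      simpa using (hasDerivAt_id x).const_mul 2
    have h2 : HasDerivAt (fun x : ℝ => 2 * (a - x)) (-2) x := by
      have := ((hasDerivAt_id x).const_sub a).const_mul 2
      simpa using this
    have h1' := h1.inv (by positivity)
    have h2' := h2.inv (by simpa using mul_ne_zero two_ne_zero hxa)
    have := h1'.sub h2'
    have heq : ((fun x : ℝ => 2 * x)⁻¹ - (fun x : ℝ => 2 * (a - x))⁻¹) = h := by
      funext y; simp [hh_def, one_div]
    rw [heq] at this
    refine this.congr_deriv ?_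
    field_simp
  have hFd : ∀ x ∈ Ioo 0 a,
      HasDerivAt F ((-(1 / (2 * x ^ 2)) - 1 / (2 * (a - x) ^ 2)) * f x ^ 2
        + h x * (2 * f x * deriv f x)) x := by
    intro x hx
    have hpow : HasDerivAt (fun y => f y ^ 2) (2 * f x * deriv f x) x := by
      have := ((hfd x).hasDerivAt).fun_pow 2
      simpa [mul_comm, mul_assoc] using this
    exact (hhd x hx).mul hpow
  -- F is differentiable everywhere
  have hFdiff : ∀ x : ℝ, DifferentiableAt ℝ F x := by
    intro x
    by_cases hx : x ∈ Ioo 0 a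
    · exact (hFd x hx).differentiableAt
    · have hx' : x ∉ tsupport f := fun h => hx (hsuppU h)
      exact (hFe0 x hx').differentiableAt_iff.2 (differentiableAt_const 0)
  -- the pointwise identity on Ioo 0 a
  have hkey : ∀ x ∈ Ioo 0 a,
      4 * deriv f x ^ 2 - W x = G x + 4 * deriv F x := by
    intro x hx
    have hx0 : x ≠ 0 := ne_of_gt hx.1
    have hxa : a - x ≠ 0 := ne_of_gt (sub_pos.2 hx.2)
    rw [(hFd x hx).deriv]
    simp only [hW_def, hG_def, hh_def]
    field_simp
    ring
  -- continuity of the auxiliary functions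
  have hcont_of : ∀ g : ℝ → ℝ, (∀ x ∈ Ioo 0 a, ContinuousAt g x) →
      (∀ x ∉ tsupport f, g =ᶠ[nhds x] 0) → Continuous g := by
    intro g h1 h2
    rw [continuous_iff_continuousAt]
    intro x
    by_cases hx : x ∈ Ioo 0 a
    · exact h1 x hx
    · have hx' : x ∉ tsupport f := fun h => hx (hsuppU h)
      exact ContinuousAt.congr (continuousAt_const) (h2 x hx').symm
  have hhcont : ∀ x ∈ Ioo 0 a, ContinuousAt h x := by
    intro x hx
    have hx0 : (2 : ℝ) * x ≠ 0 := by have := hx.1; positivity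
    have hxa : (2 : ℝ) * (a - x) ≠ 0 := by
      simpa using mul_ne_zero two_ne_zero (ne_of_gt (sub_pos.2 hx.2))
    exact ((continuousAt_const.div ((continuous_const.mul continuous_id).continuousAt) hx0).sub
      (continuousAt_const.div
        ((continuous_const.mul (continuous_const.sub continuous_id)).continuousAt) hxa))
  have hWcont : Continuous W := by
    apply hcont_of _ _ hWe0
    intro x hx
    have : x ^ 2 * (a - x) ^ 2 ≠ 0 := by
      have h1 : x ≠ 0 := ne_of_gt hx.1
      have h2 : a - x ≠ 0 := ne_of_gt (sub_pos.2 hx.2)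
      positivity
    exact (continuousAt_const.mul ((hfc.pow 2).continuousAt)).div
      (((continuous_id.pow 2).mul ((continuous_const.sub continuous_id).pow 2)).continuousAt) this
  have hGcont : Continuous G := by
    apply hcont_of _ _ hGe0
    intro x hx
    exact ((continuous_const.continuousAt.mul
      ((hf'c.continuousAt).sub ((hhcont x hx).mul hfc.continuousAt))).pow 2)
  have hF'cont : Continuous (deriv F) := by
    apply hcont_of
    · intro x hx
      have : Set.EqOn (deriv F) (fun y => (-(1 / (2 * y ^ 2)) - 1 / (2 * (a - y) ^ 2)) * f y ^ 2
          + h y * (2 * f y * deriv f y)) (Ioo 0 a) := fun y hy => (hFd y hy).deriv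
      apply ContinuousAt.congr _ (Filter.eventuallyEq_of_mem (isOpen_Ioo.mem_nhds hx) this).symm
      have hx0 : x ≠ 0 := ne_of_gt hx.1
      have hxa : a - x ≠ 0 := ne_of_gt (sub_pos.2 hx.2)
      have c1 : ContinuousAt (fun y : ℝ => -(1 / (2 * y ^ 2)) - 1 / (2 * (a - y) ^ 2)) x := by
        have e1 : (2 : ℝ) * x ^ 2 ≠ 0 := by positivity
        have e2 : (2 : ℝ) * (a - x) ^ 2 ≠ 0 := by positivity
        exact ((continuousAt_const.div
            ((continuous_const.mul (continuous_id.pow 2)).continuousAt) e1).neg).sub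
          (continuousAt_const.div
            ((continuous_const.mul ((continuous_const.sub continuous_id).pow 2)).continuousAt) e2)
      exact (c1.mul ((hfc.pow 2).continuousAt)).add
        ((hhcont x hx).mul (((continuous_const.mul hfc).mul hf'c).continuousAt))
    · intro x hx
      have : ∀ᶠ y in nhds x, y ∉ tsupport f :=
        Filter.eventually_of_mem (hopen.mem_nhds hx) (fun y hy => hy)
      filter_upwards [this] with y hy
      simp [hF'0 y hy]
  -- compact support and integrability
  have hcs : ∀ g : ℝ → ℝ, (∀ x ∉ tsupport f, g =ᶠ[nhds x] 0) → HasCompactSupport g := by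
    intro g hg
    apply HasCompactSupport.mono' hsupp
    intro x hx
    by_contra hx'
    exact hx ((hg x hx').self_of_nhds)
  have hWint : IntegrableOn W (Ioo 0 a) :=
    (hWcont.integrable_of_hasCompactSupport (hcs W hWe0)).integrableOn
  have hGint : IntegrableOn G (Ioo 0 a) :=
    (hGcont.integrable_of_hasCompactSupport (hcs G hGe0)).integrableOn
  have hF'int : IntegrableOn (deriv F) (Ioo 0 a) :=
    (hF'cont.integrable_of_hasCompactSupport (hcs _ (by
      intro x hx
      have : ∀ᶠ y in nhds x, y ∉ tsupport f :=
        Filter.eventually_of_mem (hopen.mem_nhds hx) (fun y hy => hy)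
      filter_upwards [this] with y hy
      simp [hF'0 y hy]))).integrableOn
  have hf'int : IntegrableOn (fun x => deriv f x ^ 2) (Ioo 0 a) := by
    apply Integrable.integrableOn
    apply Continuous.integrable_of_hasCompactSupport (hf'c.pow 2)
    apply HasCompactSupport.mono' hsupp
    intro x hx
    by_contra hx'
    simp [hf'0 x hx'] at hx
  -- ∫ deriv F over Ioo 0 a is zero
  have hF0 : ∀ x ∉ Ioo 0 a, deriv F x = 0 := fun x hx =>
    hF'0 x (fun h => hx (hsuppU h))
  have hintF : ∫ x in Ioo 0 a, deriv F x = 0 := by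
    rw [setIntegral_eq_integral_of_forall_compl_eq_zero hF0]
    have h1 : (-1 : ℝ) ≤ a + 1 := by linarith
    have : ∫ x, deriv F x = ∫ x in Ioc (-1 : ℝ) (a + 1), deriv F x := by
      refine (setIntegral_eq_integral_of_forall_compl_eq_zero (fun x hx => ?_)).symm
      apply hF0
      intro hx'
      exact hx ⟨by linarith [hx'.1], by linarith [hx'.2]⟩
    rw [this, ← intervalIntegral.integral_of_le h1]
    rw [intervalIntegral.integral_deriv_eq_sub (fun x _ => hFdiff x)
      (hF'cont.intervalIntegrable _ _)]
    have e1 : f (a + 1) = 0 := by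
      apply image_eq_zero_of_notMem_tsupport
      intro hmem
      have := (hsuppU hmem).2
      linarith
    have e2 : f (-1 : ℝ) = 0 := by
      apply image_eq_zero_of_notMem_tsupport
      intro hmem
      have := (hsuppU hmem).1
      linarith
    simp [hF_def, e1, e2]
  -- assemble
  have hsplit : ∫ x in Ioo 0 a, (4 * deriv f x ^ 2 - W x)
      = ∫ x in Ioo 0 a, (G x + 4 * deriv F x) := by
    apply setIntegral_congr_fun measurableSet_Ioo
    intro x hx
    exact hkey x hx
  have lhs_eq : ∫ x in Ioo 0 a, (4 * deriv f x ^ 2 - W x)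
      = 4 * (∫ x in Ioo 0 a, deriv f x ^ 2) - ∫ x in Ioo 0 a, W x := by
    rw [integral_sub (hf'int.const_mul 4) hWint, integral_const_mul]
  have rhs_eq : ∫ x in Ioo 0 a, (G x + 4 * deriv F x)
      = ∫ x in Ioo 0 a, G x := by
    rw [integral_add hGint (hF'int.const_mul 4), integral_const_mul, hintF]
    ring
  have hGnonneg : 0 ≤ ∫ x in Ioo 0 a, G x := by
    apply integral_nonneg
    intro x
    positivity
  have : 0 ≤ 4 * (∫ x in Ioo 0 a, deriv f x ^ 2) - ∫ x in Ioo 0 a, W x := by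
    rw [← lhs_eq, hsplit, rhs_eq]
    exact hGnonneg
  linarith
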